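/- A nil Banach algebra is nilpotent: if A is a Banach algebra over ℝ or ℂ in which every element a satisfies aⁿ = 0 for some n depending on a, then there exists N such that the product of any N elements of A is zero. -/

import Mathlib

open Filter Topology

noncomputable section

/-- The free non-unital associative algebra `F⟨X⟩` on countably many
variables `x₀, x₁, x₂, …`, realized as the semigroup algebra of the free
semigroup on `ℕ`. -/
abbrev FreeNC (F : Type*) [Field F] : Type _ := MonoidAlgebra F (FreeSemigroup ℕ)

/-- Evaluation of noncommutative polynomials: the non-unital algebra
homomorphism `F⟨X⟩ → A` sending `xᵢ` to `v i`. -/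
def evalAt {F : Type*} [Field F] {A : Type*} [NonUnitalRing A] [Module F A]
    [IsScalarTower F A A] [SMulCommClass F A A] (v : ℕ → A) :
    FreeNC F →ₙₐ[F] A :=
  MonoidAlgebra.liftMagma F (FreeSemigroup.lift v)

/-- `f ∈ F⟨X⟩` is a polynomial identity of `A` if it vanishes under every
substitution of elements of `A` for the variables. -/
def IsPolyId (F : Type*) [Field F] (A : Type*) [NonUnitalRing A] [Module F A]
    [IsScalarTower F A A] [SMulCommClass F A A] (f : FreeNC F) : Prop :=
  ∀ v : ℕ → A, evalAt v f = 0

/-- The number of occurrences of the variable `xᵢ` in the monomial (word) `w`. -/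
def degOf (w : FreeSemigroup ℕ) (i : ℕ) : ℕ := (w.head :: w.tail).count i

/- The multihomogeneous component of `f` of multidegree `d`: the sum of the
monomial terms of `f` in which `xᵢ` occurs exactly `d i` times for every `i`. -/
open scoped Classical in
def component {F : Type*} [Field F] (d : ℕ →₀ ℕ) (f : FreeNC F) : FreeNC F :=
  MonoidAlgebra.ofCoeff (Finsupp.filter (fun w => ∀ i, degOf w i = d i) f.coeff)

/-- `prodSeq f n = f 0 * f 1 * ⋯ * f n`, a product of `n + 1` elements. -/
def prodSeq {A : Type*} [Mul A] (f : ℕ → A) : ℕ → A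
  | 0 => f 0
  | n+1 => prodSeq f n * f (n+1)

/-- `word n = x₀ x₁ ⋯ xₙ`, the monomial word of length `n + 1`. -/
def word : ℕ → FreeSemigroup ℕ
  | 0 => .of 0
  | n+1 => word n * .of (n+1)

/-! By Baire's theorem one of the closed sets `{a | aⁿ⁺¹ = 0}` has an interior point `a₀`. For
every `x`, `t ↦ (a₀ + t x)ⁿ⁺¹` is then a polynomial vanishing for all small `t`, so its top
coefficient `xⁿ⁺¹` vanishes: `A` is nil of bounded index.

Inside the unitization, `A` is an ideal `I` with `aᵐ = 0` on `I`, and the Nagata–Higman argument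
applies. Let `Jₛ` be the ideal generated by the `s`-th powers of elements of `I`. Linearizing
`(a + t c)ˢ⁺¹ ∈ Jₛ₊₁` in `t` gives `∑ᵢ aⁱ c aˢ⁻ⁱ ∈ Jₛ₊₁`, and Higman's identity turns this into
`(s + 1) aˢ z bˢ ∈ Jₛ₊₁`. Dividing by `s + 1` gives `Jₛ I Jₛ ⊆ Jₛ₊₁`, so long products of elements
of `I` lie in `Jₘ₊₁ = 0`. -/

theorem prodSeq_add {M : Type*} [Semigroup M] (f : ℕ → M) (p q : ℕ) :
    prodSeq f (p + q + 1) = prodSeq f p * prodSeq (fun i => f (p + 1 + i)) q := by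
  induction q with
  | zero => rfl
  | succ q ih =>
    rw [← add_assoc, prodSeq, ih, prodSeq, mul_assoc,
      show p + q + 1 + 1 = p + 1 + (q + 1) by omega]

theorem prodSeq_succ' {M : Type*} [Semigroup M] (f : ℕ → M) (n : ℕ) :
    prodSeq f (n + 1) = f 0 * prodSeq (fun i => f (i + 1)) n := by
  induction n with
  | zero => rfl
  | succ n ih => rw [prodSeq, ih, prodSeq, mul_assoc]

theorem map_prodSeq {M N G : Type*} [Mul M] [Mul N] [FunLike G M N] [MulHomClass G M N] (φ : G)
    (f : ℕ → M) (n : ℕ) : φ (prodSeq f n) = prodSeq (φ ∘ f) n := by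
  induction n with
  | zero => rfl
  | succ n ih => rw [prodSeq, map_mul, ih, prodSeq, Function.comp_apply]

theorem prodSeq_const {M : Type*} [Monoid M] (a : M) (n : ℕ) :
    prodSeq (fun _ => a) n = a ^ (n + 1) := by
  induction n with
  | zero => simp [prodSeq]
  | succ n ih => rw [prodSeq, ih, ← pow_succ]

theorem continuous_prodSeq_const {M : Type*} [Mul M] [TopologicalSpace M] [ContinuousMul M]
    (n : ℕ) : Continuous fun a : M => prodSeq (fun _ => a) n := by
  induction n with
  | zero => exact continuous_id
  | succ n ih => exact ih.mul continuous_id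

section LinearizedPower

variable {R : Type*} [Ring R]

def linPow (n : ℕ) (x y : R) : R :=
  ∑ i ∈ Finset.range n, x ^ i * y * x ^ (n - 1 - i)

theorem linPow_succ (n : ℕ) (x y : R) :
    linPow (n + 1) x y = linPow n x y * x + x ^ n * y := by
  rw [linPow, Finset.sum_range_succ, linPow, Finset.sum_mul, Nat.add_sub_cancel, Nat.sub_self,
    pow_zero, mul_one]
  congr 1
  refine Finset.sum_congr rfl fun i hi => ?_
  rw [mul_assoc _ _ x, ← pow_succ, show n - 1 - i + 1 = n - i by grind]

/-- Higman's identity. -/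
theorem sum_linPow_mul_pow (k : ℕ) (x y c : R) :
    ∑ j ∈ Finset.range (k + 1), linPow (k + 1) x (c * y ^ j) * y ^ (k - j)
      = (k + 1) • (x ^ k * c * y ^ k)
        + ∑ i ∈ Finset.range k, x ^ i * c * linPow (k + 1) y (x ^ (k - i)) := by
  simp only [linPow, Nat.add_sub_cancel, Finset.sum_mul, Finset.mul_sum]
  rw [Finset.sum_comm, Finset.sum_range_succ, add_comm]
  congr 1
  · rw [← Finset.card_range (k + 1), ← Finset.sum_const, Finset.card_range]
    refine Finset.sum_congr rfl fun j hj => ?_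
    rw [Nat.sub_self, pow_zero, mul_one, mul_assoc, mul_assoc, ← pow_add,
      Nat.add_sub_cancel' (Finset.mem_range_succ_iff.1 hj), ← mul_assoc]
  · simp only [mul_assoc]

end LinearizedPower

namespace Polynomial

theorem coeff_mem_of_forall_eval_algebraMap_mem {F R : Type*} [Field F] [Ring R]
    [Algebra F R] (T : Submodule F R) {p : R[X]} {S : Set F} (hS : S.Infinite)
    (h : ∀ t ∈ S, p.eval (algebraMap F R t) ∈ T) (d : ℕ) : p.coeff d ∈ T := by
  -- a functional vanishing on `T` but not on `p.coeff d` turns `p` into a nonzero scalar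
  -- polynomial with infinitely many roots
  by_contra hd
  obtain ⟨φ, hφd, hTφ⟩ := Submodule.exists_le_ker_of_notMem hd
  set N := p.natDegree + 1
  let q : F[X] := ∑ i ∈ Finset.range N, monomial i (φ (p.coeff i))
  have hq : ∀ t ∈ S, q.IsRoot t := by
    intro t ht
    have h1 : φ (p.eval (algebraMap F R t)) = 0 := hTφ (h t ht)
    rw [eval_eq_sum_range, map_sum] at h1
    simp only [IsRoot, q, eval_finsetSum, eval_monomial]
    rw [← h1]
    refine Finset.sum_congr rfl fun i _ => ?_
    rw [← map_pow, ← Algebra.commutes, ← Algebra.smul_def, map_smul, smul_eq_mul, mul_comm]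
  have hq0 : q = 0 := eq_zero_of_infinite_isRoot q (hS.mono hq)
  have hdN : d < N := Nat.lt_succ_of_le (le_natDegree_of_ne_zero fun h0 => hd (h0 ▸ T.zero_mem))
  apply hφd
  simpa [q, finsetSum_coeff, coeff_monomial, hdN] using congrArg (coeff · d) hq0

variable {F R : Type*} [Field F] [Ring R] [Algebra F R]

theorem eval_algebraMap_C_add_C_mul_X_pow (x y : R) (n : ℕ) (t : F) :
    ((C x + C y * X) ^ n).eval (algebraMap F R t) = (x + t • y) ^ n := by
  -- evaluation at the central element `algebraMap F R t` is multiplicative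
  let ev := eval₂RingHom' (RingHom.id R) (algebraMap F R t) fun a => (Algebra.commutes t a).symm
  change ev ((C x + C y * X) ^ n) = _
  rw [map_pow]
  change (C x + C y * X).eval (algebraMap F R t) ^ n = _
  rw [eval_add, eval_C, eval_mul_X, eval_C, ← Algebra.commutes, ← Algebra.smul_def]

theorem coeff_C_add_C_mul_X_pow_zero (x y : R) (n : ℕ) :
    ((C x + C y * X) ^ n).coeff 0 = x ^ n := by
  induction n with
  | zero => simp
  | succ n ih => rw [pow_succ, mul_coeff_zero, ih, pow_succ]; simp

theorem coeff_C_add_C_mul_X_pow_one (x y : R) (n : ℕ) :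
    ((C x + C y * X) ^ n).coeff 1 = linPow n x y := by
  induction n with
  | zero => simp [linPow, coeff_one]
  | succ n ih =>
    rw [pow_succ, mul_add, ← mul_assoc, coeff_add, coeff_mul_C, coeff_mul_X, coeff_mul_C,
      ih, coeff_C_add_C_mul_X_pow_zero, linPow_succ]

theorem coeff_C_add_C_mul_X_pow_self (x y : R) (n : ℕ) :
    ((C x + C y * X) ^ n).coeff n = y ^ n := by
  have hdeg : (C x + C y * X).natDegree ≤ 1 := by compute_degree
  simpa using coeff_pow_of_natDegree_le (m := n) hdeg

theorem coeff_C_add_C_mul_X_pow_mem {T : Submodule F R} {S : Set F} (hS : S.Infinite) {x y : R}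
    {n : ℕ} (h : ∀ t ∈ S, (x + t • y) ^ n ∈ T) (d : ℕ) : ((C x + C y * X) ^ n).coeff d ∈ T :=
  coeff_mem_of_forall_eval_algebraMap_mem T hS
    (fun t ht => eval_algebraMap_C_add_C_mul_X_pow x y n t ▸ h t ht) d

end Polynomial

namespace TwoSidedIdeal

variable {R : Type*} [Ring R]

theorem algebra_smul_mem {F : Type*} [CommSemiring F] [Algebra F R] (J : TwoSidedIdeal R) (t : F)
    {x : R} (hx : x ∈ J) : t • x ∈ J := by
  rw [Algebra.smul_def]
  exact J.mul_mem_left _ _ hx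

theorem pow_mem (I : TwoSidedIdeal R) {a : R} (ha : a ∈ I) {n : ℕ} (hn : n ≠ 0) : a ^ n ∈ I := by
  rw [← Nat.succ_pred_eq_of_ne_zero hn, pow_succ]
  exact I.mul_mem_left _ _ ha

def spanPow (I : TwoSidedIdeal R) (n : ℕ) : TwoSidedIdeal R :=
  span ((· ^ n) '' I)

variable {I : TwoSidedIdeal R}

theorem pow_mem_spanPow {a : R} (ha : a ∈ I) (n : ℕ) : a ^ n ∈ I.spanPow n :=
  subset_span ⟨a, ha, rfl⟩

theorem spanPow_eq_bot {m : ℕ} (h : ∀ a ∈ I, a ^ m = 0) : I.spanPow m = ⊥ := by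
  refine le_bot_iff.1 (span_le.2 ?_)
  rintro _ ⟨a, ha, rfl⟩
  simp [h a ha]

theorem linPow_mem_spanPow (F : Type*) [Field F] [CharZero F] [Algebra F R] {a c : R} (ha : a ∈ I)
    (hc : c ∈ I) (n : ℕ) :
    linPow n a c ∈ I.spanPow n := by
  have h := Polynomial.coeff_C_add_C_mul_X_pow_mem (T := (I.spanPow n).asIdeal.restrictScalars F)
    Set.infinite_univ (fun t _ => pow_mem_spanPow (I.add_mem ha (I.algebra_smul_mem t hc)) n) 1
  rwa [Polynomial.coeff_C_add_C_mul_X_pow_one] at h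

theorem pow_mul_mul_pow_mem_spanPow_succ (F : Type*) [Field F] [CharZero F] [Algebra F R]
    {a b z : R} (ha : a ∈ I) (hb : b ∈ I) (hz : z ∈ I) (s : ℕ) :
    a ^ s * z * b ^ s ∈ I.spanPow (s + 1) := by
  set J := I.spanPow (s + 1)
  have hleft : ∑ j ∈ Finset.range (s + 1), linPow (s + 1) a (z * b ^ j) * b ^ (s - j) ∈ J :=
    sum_mem fun j _ => J.mul_mem_right _ _ (linPow_mem_spanPow F ha (I.mul_mem_right _ _ hz) _)
  have hright : ∑ i ∈ Finset.range s, a ^ i * z * linPow (s + 1) b (a ^ (s - i)) ∈ J :=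
    sum_mem fun i hi => J.mul_mem_left _ _ <| linPow_mem_spanPow F hb (I.pow_mem ha (by grind)) _
  have hsum : (s + 1) • (a ^ s * z * b ^ s) ∈ J := by
    rw [← add_sub_cancel_right ((s + 1) • (a ^ s * z * b ^ s)), ← sum_linPow_mul_pow]
    exact J.sub_mem hleft hright
  have hsum' : ((s + 1 : ℕ) : F) • (a ^ s * z * b ^ s) ∈ J := by rwa [Nat.cast_smul_eq_nsmul]
  have h := J.algebra_smul_mem ((s + 1 : ℕ) : F)⁻¹ hsum'
  rwa [smul_smul, inv_mul_cancel₀ (Nat.cast_ne_zero.2 s.succ_ne_zero), one_smul] at h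

theorem mul_mul_mem_spanPow_succ (F : Type*) [Field F] [CharZero F] [Algebra F R] {s : ℕ}
    {x y z : R} (hx : x ∈ I.spanPow s) (hz : z ∈ I) (hy : y ∈ I.spanPow s) :
    x * z * y ∈ I.spanPow (s + 1) := by
  induction hx using span_induction generalizing z y with
  | mem x hx =>
    obtain ⟨a, ha, rfl⟩ := hx
    induction hy using span_induction generalizing z with
    | mem y hy =>
      obtain ⟨b, hb, rfl⟩ := hy
      exact pow_mul_mul_pow_mem_spanPow_succ F ha hb hz s
    | zero => simp
    | add y y' _ _ h h' => rw [mul_add]; exact add_mem _ (h hz) (h' hz)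
    | neg y _ h => rw [mul_neg]; exact neg_mem _ (h hz)
    | left_absorb r y _ h =>
      rw [← mul_assoc, mul_assoc _ z r]; exact h (I.mul_mem_right _ _ hz)
    | right_absorb r y _ h => rw [← mul_assoc]; exact mul_mem_right _ _ _ (h hz)
  | zero => simp
  | add x x' _ _ h h' => rw [add_mul, add_mul]; exact add_mem _ (h hz hy) (h' hz hy)
  | neg x _ h => rw [neg_mul, neg_mul]; exact neg_mem _ (h hz hy)
  | left_absorb r x _ h => rw [mul_assoc r, mul_assoc r]; exact mul_mem_left _ _ _ (h hz hy)
  | right_absorb r x _ h => rw [mul_assoc x r]; exact h (I.mul_mem_left _ _ hz) hy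

variable (I) in
theorem exists_prodSeq_mem_spanPow (F : Type*) [Field F] [CharZero F] [Algebra F R] (k : ℕ) :
    ∃ N, ∀ f : ℕ → R, (∀ i, f i ∈ I) → prodSeq f N ∈ I.spanPow (k + 1) := by
  induction k with
  | zero => exact ⟨0, fun f hf => by simpa [prodSeq] using pow_mem_spanPow (hf 0) 1⟩
  | succ k ih =>
    obtain ⟨N, hN⟩ := ih
    refine ⟨N + (N + 1) + 1, fun f hf => ?_⟩
    -- `2N + 3` factors: `N + 1` of them, then `f (N + 1)`, then `N + 1` more
    rw [prodSeq_add, prodSeq_succ', ← mul_assoc]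
    exact mul_mul_mem_spanPow_succ F (hN f hf) (hf _) (hN _ fun i => hf _)

/-- The Nagata–Higman theorem. -/
theorem exists_prodSeq_eq_zero_of_pow_eq_zero (F : Type*) [Field F] [CharZero F] [Algebra F R]
    {m : ℕ} (hm : ∀ a ∈ I, a ^ m = 0) :
    ∃ N, ∀ f : ℕ → R, (∀ i, f i ∈ I) → prodSeq f N = 0 := by
  obtain ⟨N, hN⟩ := exists_prodSeq_mem_spanPow I F m
  have hbot : I.spanPow (m + 1) = ⊥ :=
    spanPow_eq_bot fun a ha => by rw [pow_succ, hm a ha, zero_mul]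
  exact ⟨N, fun f hf => by simpa [hbot] using hN f hf⟩

end TwoSidedIdeal

theorem Unitization.inr_prodSeq_const {F A : Type*} [Field F] [NonUnitalRing A] [Module F A]
    [IsScalarTower F A A] [SMulCommClass F A A] (a : A) (n : ℕ) :
    ((prodSeq (fun _ => a) n : A) : Unitization F A) = (a : Unitization F A) ^ (n + 1) := by
  rw [← prodSeq_const]
  exact map_prodSeq (Unitization.inrNonUnitalAlgHom F A) _ n

theorem exists_prodSeq_eq_zero_of_prodSeq_const_eq_zero (F : Type*) [Field F] [CharZero F]
    {A : Type*} [NonUnitalRing A] [Module F A] [IsScalarTower F A A] [SMulCommClass F A A] {m : ℕ}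
    (hm : ∀ a : A, prodSeq (fun _ => a) m = 0) : ∃ N, ∀ f : ℕ → A, prodSeq f N = 0 := by
  let I := TwoSidedIdeal.ker (Unitization.fstHom F A)
  have hI : ∀ x ∈ I, x = (x.snd : Unitization F A) := fun x hx => by
    have hx : x.fst = 0 := (TwoSidedIdeal.mem_ker _).1 hx
    simpa [hx] using (Unitization.inl_fst_add_inr_snd_eq x).symm
  have hpow : ∀ x ∈ I, x ^ (m + 1) = 0 := fun x hx => by
    rw [hI x hx, ← Unitization.inr_prodSeq_const, hm, Unitization.inr_zero]
  obtain ⟨N, hN⟩ := I.exists_prodSeq_eq_zero_of_pow_eq_zero F hpow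
  refine ⟨N, fun f => Unitization.inr_injective (R := F) ?_⟩
  rw [Unitization.inr_zero, ← hN (fun i => (f i : Unitization F A))
    fun i => (TwoSidedIdeal.mem_ker _).2 (Unitization.fst_inr F (f i))]
  exact map_prodSeq (Unitization.inrNonUnitalAlgHom F A) f N

theorem exists_nonempty_interior_prodSeq_const_eq_zero {M : Type*} [Mul M] [Zero M]
    [TopologicalSpace M] [T1Space M] [BaireSpace M] [ContinuousMul M]
    (hnil : ∀ a : M, ∃ n, prodSeq (fun _ => a) n = 0) :
    ∃ n, (interior {a : M | prodSeq (fun _ => a) n = 0}).Nonempty :=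
  nonempty_interior_of_iUnion_of_closed
    (fun n => isClosed_singleton.preimage (continuous_prodSeq_const n))
    (Set.iUnion_eq_univ_iff.2 hnil)

theorem prodSeq_const_eq_zero_of_mem_interior (F : Type*) [NontriviallyNormedField F]
    {A : Type*} [NonUnitalRing A] [Module F A] [IsScalarTower F A A] [SMulCommClass F A A]
    [TopologicalSpace A] [ContinuousAdd A] [ContinuousSMul F A] {n : ℕ} {a₀ : A}
    (h : a₀ ∈ interior {a : A | prodSeq (fun _ => a) n = 0}) (x : A) :
    prodSeq (fun _ => x) n = 0 := by
  set S := {t : F | a₀ + t • x ∈ interior {a : A | prodSeq (fun _ => a) n = 0}}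
  have hS : S ∈ 𝓝 (0 : F) := by
    have hc : Continuous fun t : F => a₀ + t • x :=
      continuous_const.add (continuous_id.smul continuous_const)
    exact hc.continuousAt.preimage_mem_nhds (by simpa using isOpen_interior.mem_nhds h)
  have hpow : ∀ t ∈ S, ((a₀ : Unitization F A) + t • (x : Unitization F A)) ^ (n + 1) ∈
      (⊥ : Submodule F (Unitization F A)) := by
    intro t ht
    rw [Submodule.mem_bot, ← Unitization.inr_smul, ← Unitization.inr_add,
      ← Unitization.inr_prodSeq_const, interior_subset ht, Unitization.inr_zero]
  have h0 := Polynomial.coeff_C_add_C_mul_X_pow_mem (infinite_of_mem_nhds 0 hS) hpow (n + 1)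
  rw [Polynomial.coeff_C_add_C_mul_X_pow_self, Submodule.mem_bot,
    ← Unitization.inr_prodSeq_const] at h0
  exact Unitization.inr_injective (h0.trans (Unitization.inr_zero F).symm)

/-- Grabiner's theorem: a nil Banach algebra over `ℝ` or `ℂ` is
nilpotent: if every `a` satisfies `aⁿ = 0` for some `n ≥ 1`, then there is an
`N ≥ 1` such that every product of `N` elements of `A` vanishes. -/
theorem stmt_11 {F A : Type*} [RCLike F] [NonUnitalNormedRing A] [NormedSpace F A]
    [IsScalarTower F A A] [SMulCommClass F A A] [CompleteSpace A]
    (hnil : ∀ a : A, ∃ n : ℕ, prodSeq (fun _ => a) n = 0) :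
    ∃ N : ℕ, ∀ f : ℕ → A, prodSeq f N = 0 := by
  obtain ⟨n, a₀, ha₀⟩ := exists_nonempty_interior_prodSeq_const_eq_zero hnil
  exact exists_prodSeq_eq_zero_of_prodSeq_const_eq_zero F
    (prodSeq_const_eq_zero_of_mem_interior F ha₀)
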